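/- arXiv:2309.02758 — 7 statements merged into one kernel-verified Lean document; each statement's English description precedes it below -/
import Mathlib

section
/- Let Qmax denote the commutative semiring whose carrier is the non-negative rationals ℚ≥0, with addition given by maximum, multiplication given by ordinary multiplication of rationals, additive identity 0, and multiplicative identity 1. Then the Qmax-semimodule Qmax ⊕ Qmax (pairs of non-negative rationals with componentwise maximum as addition and componentwise scalar multiplication) has infinite length: for every r ∈ ℕ there is a strictly increasing chain of r+1 subsemimodules of Qmax ⊕ Qmax. Explicitly, setting uᵢ = ⟨i, 1⟩ and Mᵢ the subsemimodule generated by {u₀, …, uᵢ}, the chain M₀ ⊊ M₁ ⊊ M₂ ⊊ ⋯ is an infinite strictly increasing chain. -/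
/-- The length of an `S`-semimodule `M`: the supremum of all `r : ℕ` such that there exists a
strictly increasing chain `M₀ ⊊ M₁ ⊊ ⋯ ⊊ M_r` of subsemimodules (i.e. `S`-submodules) of `M`. -/
noncomputable def semimoduleLength (S M : Type*) [Semiring S] [AddCommMonoid M]
    [Module S M] : ℕ∞ :=
  ⨆ r : {r : ℕ // ∃ c : Fin (r + 1) → Submodule S M, StrictMono c}, ((r : ℕ) : ℕ∞)

/-- The semiring `Qmax`: carrier the non-negative rationals, addition is `max`,
multiplication is ordinary multiplication. -/
def Qmax : Type := NNRat

/-- View an element of `Qmax` as a non-negative rational (the identity on carriers). -/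
def Qmax.toNN : Qmax → NNRat := id

/-- View a non-negative rational as an element of `Qmax` (the identity on carriers). -/
def Qmax.mk : NNRat → Qmax := id

namespace Qmax

instance : Add Qmax := ⟨fun a b => mk (max (toNN a) (toNN b))⟩
instance : Mul Qmax := ⟨fun a b => mk (toNN a * toNN b)⟩
instance : Zero Qmax := ⟨mk 0⟩
instance : One Qmax := ⟨mk 1⟩

instance : CommSemiring Qmax where
  add a b := a + b
  add_assoc a b c := congrArg mk (max_assoc (toNN a) (toNN b) (toNN c))
  zero := 0
  zero_add a := congrArg mk (max_eq_right ((zero_le : 0 ≤ toNN a)))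
  add_zero a := congrArg mk (max_eq_left ((zero_le : 0 ≤ toNN a)))
  add_comm a b := congrArg mk (max_comm (toNN a) (toNN b))
  nsmul := nsmulRec
  mul a b := a * b
  left_distrib a b c :=
    congrArg mk ((monotone_mul_left_of_nonneg ((zero_le : 0 ≤ toNN a))).map_max)
  right_distrib a b c :=
    congrArg mk ((monotone_mul_right_of_nonneg ((zero_le : 0 ≤ toNN c))).map_max)
  zero_mul a := congrArg mk (zero_mul (toNN a))
  mul_zero a := congrArg mk (mul_zero (toNN a))
  mul_assoc a b c := congrArg mk (mul_assoc (toNN a) (toNN b) (toNN c))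
  npow := npowRec
  one := 1
  one_mul a := congrArg mk (one_mul (toNN a))
  mul_one a := congrArg mk (mul_one (toNN a))
  mul_comm a b := congrArg mk (mul_comm (toNN a) (toNN b))

end Qmax

/-! The slope cone `{(a, b) | a ≤ i · b}` is a subsemimodule of `Qmax × Qmax`: it is closed under
componentwise `max` and under scaling. It contains `u₀, …, uᵢ`, hence `Mᵢ`, but not `u_{i+1}`,
since `i + 1 > i · 1`. So every inclusion `Mᵢ ⊆ M_{i+1}` is strict, and the length is infinite. -/

theorem le_semimoduleLength {S M : Type*} [Semiring S] [AddCommMonoid M] [Module S M] {r : ℕ}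
    {c : Fin (r + 1) → Submodule S M} (hc : StrictMono c) :
    (r : ℕ∞) ≤ semimoduleLength S M :=
  le_iSup_of_le (⟨r, c, hc⟩ : {r : ℕ // ∃ c : Fin (r + 1) → Submodule S M, StrictMono c}) le_rfl

theorem semimoduleLength_eq_top_of_strictMono {S M : Type*} [Semiring S] [AddCommMonoid M]
    [Module S M] {c : ℕ → Submodule S M} (hc : StrictMono c) :
    semimoduleLength S M = ⊤ :=
  top_le_iff.mp <| ENat.forall_natCast_le_iff_le.mp fun r _ =>
    le_semimoduleLength (hc.comp (Fin.val_strictMono (n := r + 1)))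

theorem strictMono_span_image_of_notMem_span {R M : Type*} [Semiring R] [AddCommMonoid M]
    [Module R M] {u : ℕ → M} (hu : ∀ i, u (i + 1) ∉ Submodule.span R (u '' {j | j ≤ i})) :
    StrictMono fun i => Submodule.span R (u '' {j | j ≤ i}) := by
  refine strictMono_nat_of_lt_succ fun i =>
    SetLike.lt_iff_le_and_exists.mpr ⟨?_, u (i + 1), ?_, hu i⟩
  · exact Submodule.span_mono (Set.image_mono fun j hj => Nat.le_succ_of_le hj)
  · exact Submodule.subset_span ⟨i + 1, le_refl (i + 1), rfl⟩

namespace Qmax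

@[simp] theorem toNN_mk (q : NNRat) : toNN (mk q) = q := rfl

@[simp] theorem toNN_add (a b : Qmax) : toNN (a + b) = max (toNN a) (toNN b) := rfl

@[simp] theorem toNN_mul (a b : Qmax) : toNN (a * b) = toNN a * toNN b := rfl

@[simp] theorem toNN_zero : toNN 0 = 0 := rfl

def cone (q : NNRat) : Submodule Qmax (Qmax × Qmax) where
  carrier := {x | toNN x.1 ≤ q * toNN x.2}
  zero_mem' := by simp
  add_mem' {x y} hx hy := by
    simp only [Set.mem_ofPred_eq, Prod.fst_add, Prod.snd_add, toNN_add] at *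
    exact max_le (hx.trans (by gcongr; exact le_max_left ..))
      (hy.trans (by gcongr; exact le_max_right ..))
  smul_mem' c x hx := by
    simp only [Set.mem_ofPred_eq, Prod.smul_fst, Prod.smul_snd, smul_eq_mul, toNN_mul] at *
    calc toNN c * toNN x.1 ≤ toNN c * (q * toNN x.2) := by gcongr
      _ = q * (toNN c * toNN x.2) := mul_left_comm ..

theorem mem_cone {q : NNRat} {x : Qmax × Qmax} : x ∈ cone q ↔ toNN x.1 ≤ q * toNN x.2 := Iff.rfl

end Qmax

theorem span_le_cone (i : ℕ) :
    Submodule.span Qmax ((fun j : ℕ => ((Qmax.mk (j : NNRat), Qmax.mk 1) : Qmax × Qmax)) ''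
      {j | j ≤ i}) ≤ Qmax.cone i := by
  rw [Submodule.span_le]
  rintro _ ⟨j, hj, rfl⟩
  simpa [Qmax.mem_cone] using hj

/-- `Qmax ⊕ Qmax` has infinite length; explicitly, with `uᵢ = ⟨i, 1⟩` and `Mᵢ` the
subsemimodule generated by `{u₀, …, uᵢ}`, the chain `M₀ ⊊ M₁ ⊊ ⋯` is strictly increasing. -/
theorem qmax_prod_length_eq_top :
    semimoduleLength Qmax (Qmax × Qmax) = ⊤ ∧
    StrictMono (fun i : ℕ => Submodule.span Qmax
      ((fun j : ℕ => ((Qmax.mk (j : NNRat), Qmax.mk (1 : NNRat)) : Qmax × Qmax)) '' {j | j ≤ i})) := by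
  have hchain := strictMono_span_image_of_notMem_span fun i hmem => by
    have := Qmax.mem_cone.mp (span_le_cone i hmem)
    simp at this
  exact ⟨semimoduleLength_eq_top_of_strictMono hchain, hchain⟩
end

section
/- Let S be an Artinian commutative semiring, let M be an S-semimodule of finite length, and let α : M → M be an S-linear endomorphism. Then α is surjective if and only if α is injective. -/
/-- A commutative semiring `S` is Artinian if every finitely generated `S`-semimodule has
finite length. -/
def IsArtinianSemiring (S : Type u) [CommSemiring S] : Prop :=
  ∀ (M : Type u) [AddCommMonoid M] [Module S M], Module.Finite S M →
    semimoduleLength S M ≠ ⊤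
/-!
Finite length bounds the chains of subsemimodules, so `M` is both Artinian and Noetherian, and an
injective endomorphism of an Artinian semimodule is surjective. Kernels do not detect injectivity
of semimodule maps, so for the converse one uses the congruences `{(x, y) | α^k x = α^k y}`
instead: they are subsemimodules of `M × M`, which is finitely generated and hence of finite
length because `S` is Artinian. So they stabilize, and surjectivity of `α ^ k` turns this into
injectivity of `α`.
-/

universe u v

open Function

section Order

variable {α : Type*} [Preorder α] [FiniteDimensionalOrder α]

lemma FiniteDimensionalOrder.wellFoundedLT : WellFoundedLT α :=
  ⟨SetRel.IsWellFounded.of_finiteDimensional {(a, b) : α × α | a < b}⟩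

lemma FiniteDimensionalOrder.wellFoundedGT : WellFoundedGT α :=
  ⟨SetRel.IsWellFounded.inv_of_finiteDimensional {(a, b) : α × α | a < b}⟩

end Order

section Length

variable {S M N : Type*} [Semiring S] [AddCommMonoid M] [Module S M]
  [AddCommMonoid N] [Module S N]

lemma semimoduleLength_eq_krullDim :
    (semimoduleLength S M : WithBot ℕ∞) = Order.krullDim (Submodule S M) := by
  rw [Order.krullDim_eq_iSup_length, WithBot.coe_inj]
  refine le_antisymm (iSup_le fun ⟨r, c, hc⟩ ↦ ?_) (iSup_le fun p ↦ ?_)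
  · exact le_iSup (fun p : LTSeries (Submodule S M) ↦ (p.length : ℕ∞)) (LTSeries.mk r c hc)
  · exact le_iSup (fun r : {r : ℕ // ∃ c : Fin (r + 1) → Submodule S M, StrictMono c} ↦
      ((r : ℕ) : ℕ∞)) ⟨p.length, p, p.strictMono⟩

lemma LinearEquiv.semimoduleLength_eq (e : M ≃ₗ[S] N) :
    semimoduleLength S M = semimoduleLength S N := by
  apply WithBot.coe_injective
  rw [semimoduleLength_eq_krullDim, semimoduleLength_eq_krullDim,
    Order.krullDim_eq_of_orderIso (Submodule.orderIsoMapComap e)]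

lemma finiteDimensionalOrder_of_semimoduleLength_ne_top (hM : semimoduleLength S M ≠ ⊤) :
    FiniteDimensionalOrder (Submodule S M) := by
  rw [← not_infiniteDimensionalOrder_iff, ← Order.krullDim_eq_top_iff,
    ← semimoduleLength_eq_krullDim]
  exact_mod_cast hM

lemma isNoetherian_of_semimoduleLength_ne_top (hM : semimoduleLength S M ≠ ⊤) :
    IsNoetherian S M :=
  have := finiteDimensionalOrder_of_semimoduleLength_ne_top hM
  isNoetherian_mk FiniteDimensionalOrder.wellFoundedGT

lemma isArtinian_of_semimoduleLength_ne_top (hM : semimoduleLength S M ≠ ⊤) :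
    IsArtinian S M :=
  have := finiteDimensionalOrder_of_semimoduleLength_ne_top hM
  FiniteDimensionalOrder.wellFoundedLT

end Length

lemma IsArtinianSemiring.semimoduleLength_ne_top {S : Type u} [CommSemiring S]
    (hS : IsArtinianSemiring S) {M : Type v} [AddCommMonoid M] [Module S M] [Module.Finite S M] :
    semimoduleLength S M ≠ ⊤ := by
  have := Module.Finite.small.{u} S M
  rw [← (Shrink.linearEquiv S M).semimoduleLength_eq]
  exact hS _ inferInstance

lemma injective_of_surjective_of_isNoetherian_prod {S M : Type*} [Semiring S] [AddCommMonoid M]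
    [Module S M] [IsNoetherian S (M × M)] (f : M →ₗ[S] M) (hf : Surjective f) : Injective f := by
  let identified : ℕ →o Submodule S (M × M) :=
    ⟨fun k ↦ LinearMap.eqLocus ((f ^ k) ∘ₗ LinearMap.fst S M M) ((f ^ k) ∘ₗ LinearMap.snd S M M),
      monotone_nat_of_le_succ fun k p (hp : (f ^ k) p.1 = (f ^ k) p.2) ↦
        show (f ^ (k + 1)) p.1 = (f ^ (k + 1)) p.2 by
          rw [pow_succ', Module.End.mul_apply, Module.End.mul_apply, hp]⟩
  obtain ⟨n, hn⟩ := monotone_stabilizes_iff_noetherian.mpr ‹_› identified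
  have hfn : Surjective (f ^ n) := by
    rw [Module.End.coe_pow]
    exact hf.iterate n
  intro x y hxy
  obtain ⟨x, rfl⟩ := hfn x
  obtain ⟨y, rfl⟩ := hfn y
  have hxy' : (x, y) ∈ identified (n + 1) :=
    show (f ^ (n + 1)) x = (f ^ (n + 1)) y by
      rwa [pow_succ', Module.End.mul_apply, Module.End.mul_apply]
  rwa [← hn (n + 1) n.le_succ] at hxy'

/-- Over an Artinian commutative semiring, an endomorphism of a finite-length semimodule is
surjective if and only if it is injective. -/
theorem surjective_iff_injective {S : Type u} [CommSemiring S] (hS : IsArtinianSemiring S)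
    {M : Type v} [AddCommMonoid M] [Module S M] (hM : semimoduleLength S M ≠ ⊤)
    (α : M →ₗ[S] M) : Function.Surjective α ↔ Function.Injective α := by
  have : IsArtinian S M := isArtinian_of_semimoduleLength_ne_top hM
  have : IsNoetherian S M := isNoetherian_of_semimoduleLength_ne_top hM
  have : IsNoetherian S (M × M) :=
    isNoetherian_of_semimoduleLength_ne_top hS.semimoduleLength_ne_top
  exact ⟨injective_of_surjective_of_isNoetherian_prod α,
    IsArtinian.surjective_of_injective_endomorphism α⟩
end

section
/- Let S be a commutative semiring and M an S-semimodule such that the dual semimodule M^∨ = Hom_S(M, S) (with pointwise addition and scalar multiplication) has finite length. Let α : M → M be a pseudoregular S-linear endomorphism, let f ∈ M^∨, let v ∈ M, and define s_k = f(α^k(v)) for k ∈ ℕ. If s₁ ≠ 0, then s_k ≠ 0 for infinitely many k ∈ ℕ; more precisely, for every n ∈ ℕ with n ≥ 1 and s_n ≠ 0 there exists k with n < k ≤ n + ℓ(M^∨) + 1 such that s_k ≠ 0. -/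
section Aux

variable {S : Type*} [CommSemiring S] {M : Type*} [AddCommMonoid M] [Module S M]

lemma chain_le_semimoduleLength (hdual : semimoduleLength S (M →ₗ[S] S) ≠ ⊤) {r : ℕ}
    (c : Fin (r + 1) → Submodule S (M →ₗ[S] S)) (hc : StrictMono c) :
    r ≤ (semimoduleLength S (M →ₗ[S] S)).toNat := by
  have h : ((r : ℕ) : ℕ∞) ≤ semimoduleLength S (M →ₗ[S] S) :=
    le_iSup (fun r : {r : ℕ // ∃ c : Fin (r + 1) → Submodule S (M →ₗ[S] S), StrictMono c} =>
      ((r : ℕ) : ℕ∞)) ⟨r, c, hc⟩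
  rwa [← ENat.coe_toNat hdual, Nat.cast_le] at h

lemma exists_stable_of_monotone (hdual : semimoduleLength S (M →ₗ[S] S) ≠ ⊤)
    (D : ℕ → Submodule S (M →ₗ[S] S)) (hD : Monotone D) (a : ℕ) :
    ∃ j, a ≤ j ∧ j ≤ a + (semimoduleLength S (M →ₗ[S] S)).toNat ∧ D j = D (j + 1) := by
  set L := (semimoduleLength S (M →ₗ[S] S)).toNat with hL
  by_contra h
  push_neg at h
  have hlt : ∀ j, a ≤ j → j ≤ a + L → D j < D (j + 1) := fun j h1 h2 =>
    lt_of_le_of_ne (hD (Nat.le_succ j)) (h j h1 h2)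
  have hsm : StrictMono (fun i : Fin (L + 1 + 1) => D (a + (i : ℕ))) := by
    apply Fin.strictMono_iff_lt_succ.mpr
    intro i
    have hi : (i : ℕ) ≤ L := Nat.lt_succ_iff.mp i.isLt
    have h1 : (Fin.castSucc i : ℕ) = (i : ℕ) := rfl
    have h2 : (Fin.succ i : ℕ) = (i : ℕ) + 1 := rfl
    simp only [h1, h2, ← Nat.add_assoc]
    exact hlt (a + (i : ℕ)) (Nat.le_add_right _ _) (by omega)
  exact absurd (chain_le_semimoduleLength hdual _ hsm) (by omega)

lemma exists_stable_of_antitone (hdual : semimoduleLength S (M →ₗ[S] S) ≠ ⊤)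
    (D : ℕ → Submodule S (M →ₗ[S] S)) (hD : Antitone D) (a : ℕ) :
    ∃ j, a ≤ j ∧ j ≤ a + (semimoduleLength S (M →ₗ[S] S)).toNat ∧ D j = D (j + 1) := by
  set L := (semimoduleLength S (M →ₗ[S] S)).toNat with hL
  by_contra h
  push_neg at h
  have hlt : ∀ j, a ≤ j → j ≤ a + L → D (j + 1) < D j := fun j h1 h2 =>
    lt_of_le_of_ne (hD (Nat.le_succ j)) (Ne.symm (h j h1 h2))
  have hsm : StrictMono (fun i : Fin (L + 1 + 1) => D (a + (L + 1) - (i : ℕ))) := by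
    apply Fin.strictMono_iff_lt_succ.mpr
    intro i
    have hi : (i : ℕ) ≤ L := Nat.lt_succ_iff.mp i.isLt
    have h1 : (Fin.castSucc i : ℕ) = (i : ℕ) := rfl
    have h2 : (Fin.succ i : ℕ) = (i : ℕ) + 1 := rfl
    have e1 : a + (L + 1) - (Fin.castSucc i : ℕ) = (a + L - (i : ℕ)) + 1 := by
      rw [h1]; omega
    have e2 : a + (L + 1) - (Fin.succ i : ℕ) = a + L - (i : ℕ) := by
      rw [h2]; omega
    simp only [e1, e2]
    exact hlt (a + L - (i : ℕ)) (by omega) (by omega)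
  exact absurd (chain_le_semimoduleLength hdual _ hsm) (by omega)

lemma main_step {S : Type*} [CommSemiring S]
    {M : Type*} [AddCommMonoid M] [Module S M]
    (hdual : semimoduleLength S (M →ₗ[S] S) ≠ ⊤)
    (α : Module.End S M)
    (hα : LinearMap.range α = LinearMap.range (α ∘ₗ α))
    (f : M →ₗ[S] S) (v : M) {n : ℕ} (hn : 1 ≤ n) (hsn : f ((α ^ n) v) ≠ 0) :
    ∃ k, n < k ∧ k ≤ n + (semimoduleLength S (M →ₗ[S] S)).toNat + 1 ∧ f ((α ^ k) v) ≠ 0 := by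
  set L := (semimoduleLength S (M →ₗ[S] S)).toNat with hL
  by_contra hcon
  push_neg at hcon
  -- hcon : ∀ k, n < k → k ≤ n + L + 1 → f ((α ^ k) v) = 0
  set g : ℕ → (M →ₗ[S] S) := fun k => f ∘ₗ (α ^ k) with hgdef
  set T : (M →ₗ[S] S) →ₗ[S] (M →ₗ[S] S) := LinearMap.lcomp S S α with hTdef
  have hT : ∀ k, T (g k) = g (k + 1) := by
    intro k
    show (f ∘ₗ α ^ k) ∘ₗ α = f ∘ₗ α ^ (k + 1)
    rw [pow_succ, Module.End.mul_eq_comp, LinearMap.comp_assoc]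
  -- ranges of powers
  have hrange : ∀ m, 1 ≤ m → LinearMap.range (α ^ m) = LinearMap.range α := by
    intro m hm
    induction m with
    | zero => omega
    | succ m ih =>
      rcases Nat.eq_zero_or_pos m with h | h
      · subst h; rw [pow_one]
      · have : α ^ (m + 1) = α ∘ₗ α ^ m := by
          rw [pow_succ', Module.End.mul_eq_comp]
        rw [this, LinearMap.range_comp, ih h, ← LinearMap.range_comp]
        exact hα.symm
  -- Step 1: the chain C and its stabilization
  set C : ℕ → Submodule S (M →ₗ[S] S) := fun j => Submodule.span S (g '' Set.Icc n j) with hCdef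
  have hCmono : Monotone C := fun a b hab =>
    Submodule.span_mono (Set.image_mono (Set.Icc_subset_Icc_right hab))
  obtain ⟨j, hj1, hj2, hj3⟩ := exists_stable_of_monotone hdual C hCmono n
  have hgj1 : g (j + 1) ∈ C j := by
    rw [hj3]
    exact Submodule.subset_span ⟨j + 1, ⟨by omega, le_refl _⟩, rfl⟩
  have hshift : ∀ t, g (j + 1 + t) ∈ Submodule.span S (g '' Set.Icc (n + t) (j + t)) := by
    intro t
    induction t with
    | zero => simpa using hgj1
    | succ t ih =>
      rw [show j + 1 + (t + 1) = (j + 1 + t) + 1 by omega, ← hT]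
      have hmem : T (g (j + 1 + t)) ∈
          Submodule.map T (Submodule.span S (g '' Set.Icc (n + t) (j + t))) :=
        Submodule.mem_map_of_mem ih
      rw [Submodule.map_span] at hmem
      have hsub : T '' (g '' Set.Icc (n + t) (j + t)) ⊆ g '' Set.Icc (n + (t + 1)) (j + (t + 1)) := by
        rintro x ⟨y, ⟨i, hi, rfl⟩, rfl⟩
        obtain ⟨hi1, hi2⟩ := hi
        exact ⟨i + 1, ⟨by omega, by omega⟩, (hT i).symm⟩
      exact Submodule.span_mono hsub hmem
  -- Step 1 conclusion: s k = 0 for all k > n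
  have step1 : ∀ k, n < k → f ((α ^ k) v) = 0 := by
    intro k
    induction k using Nat.strong_induction_on with
    | _ k ih =>
      intro hk
      by_cases hk2 : k ≤ n + L + 1
      · exact hcon k hk hk2
      · push_neg at hk2
        obtain ⟨t, rfl⟩ : ∃ t, k = j + 1 + t := ⟨k - (j + 1), by omega⟩
        have hmem := hshift t
        have hker : Submodule.span S (g '' Set.Icc (n + t) (j + t)) ≤
            LinearMap.ker (LinearMap.applyₗ (R := S) v) := by
          rw [Submodule.span_le]
          rintro x ⟨i, hi, rfl⟩
          obtain ⟨hi1, hi2⟩ := hi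
          have hni : n < i := by omega
          have hik : i < j + 1 + t := by omega
          simp only [SetLike.mem_coe, LinearMap.mem_ker, LinearMap.applyₗ_apply_apply]
          exact ih i hik hni
        have h0 := hker hmem
        simp only [LinearMap.mem_ker, LinearMap.applyₗ_apply_apply] at h0
        exact h0
  -- Step 2: the chain E and its stabilization
  set E : ℕ → Submodule S (M →ₗ[S] S) := fun j => Submodule.span S (g '' Set.Ici j) with hEdef
  have hEanti : Antitone E := fun a b hab =>
    Submodule.span_mono (Set.image_mono (Set.Ici_subset_Ici.mpr hab))
  obtain ⟨j', hj'1, hj'2, hj'3⟩ := exists_stable_of_antitone hdual E hEanti (n + 1)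
  have hgj' : g j' ∈ Submodule.span S (g '' Set.Ici (j' + 1)) := by
    rw [show Submodule.span S (g '' Set.Ici (j' + 1)) = E (j' + 1) from rfl, ← hj'3]
    exact Submodule.subset_span ⟨j', Set.self_mem_Ici, rfl⟩
  obtain ⟨w, hw⟩ : ∃ w, (α ^ j') w = (α ^ n) v := by
    have h1 : (α ^ n) v ∈ LinearMap.range (α ^ n) := LinearMap.mem_range_self _ v
    rw [hrange n hn, ← hrange j' (by omega)] at h1
    exact h1
  have hker : Submodule.span S (g '' Set.Ici (j' + 1)) ≤
      LinearMap.ker (LinearMap.applyₗ (R := S) w) := by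
    rw [Submodule.span_le]
    rintro x ⟨i, hi, rfl⟩
    have hi' : j' + 1 ≤ i := Set.mem_Ici.mp hi
    simp only [SetLike.mem_coe, LinearMap.mem_ker, LinearMap.applyₗ_apply_apply]
    have hdecomp : (α ^ i) w = (α ^ (i - j' + n)) v := by
      have e : α ^ i = (α ^ (i - j')) * (α ^ j') := by
        rw [← pow_add]
        congr 1
        omega
      calc (α ^ i) w = (α ^ (i - j')) ((α ^ j') w) := by rw [e]; rfl
        _ = (α ^ (i - j')) ((α ^ n) v) := by rw [hw]
        _ = (α ^ (i - j' + n)) v := by rw [pow_add]; rfl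
    show f ((α ^ i) w) = 0
    rw [hdecomp]
    exact step1 _ (by omega)
  have h0 := hker hgj'
  simp only [LinearMap.mem_ker, LinearMap.applyₗ_apply_apply] at h0
  apply hsn
  calc f ((α ^ n) v) = f ((α ^ j') w) := by rw [hw]
    _ = 0 := h0

end Aux

/-- Let `M` be a semimodule whose dual `M^∨ = Hom(M, S)` has finite length, `α` a
pseudoregular endomorphism, `f ∈ M^∨`, `v ∈ M`, and `s_k = f(α^k(v))`.  If `s₁ ≠ 0`,
then `s_k ≠ 0` for infinitely many `k`; more precisely, after any `n ≥ 1` with `s_n ≠ 0`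
there is `k` with `n < k ≤ n + ℓ(M^∨) + 1` and `s_k ≠ 0`. -/
theorem nonzero_infinitely_often {S : Type*} [CommSemiring S]
    {M : Type*} [AddCommMonoid M] [Module S M]
    (hdual : semimoduleLength S (M →ₗ[S] S) ≠ ⊤)
    (α : Module.End S M)
    (hα : LinearMap.range α = LinearMap.range (α ∘ₗ α))
    (f : M →ₗ[S] S) (v : M) (h1 : f ((α ^ 1) v) ≠ 0) :
    {k : ℕ | f ((α ^ k) v) ≠ 0}.Infinite ∧
      ∀ n : ℕ, 1 ≤ n → f ((α ^ n) v) ≠ 0 →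
        ∃ k : ℕ, n < k ∧ (k : ℕ∞) ≤ (n : ℕ∞) + semimoduleLength S (M →ₗ[S] S) + 1 ∧
          f ((α ^ k) v) ≠ 0 := by
  set L := (semimoduleLength S (M →ₗ[S] S)).toNat with hLdef
  have hcast : semimoduleLength S (M →ₗ[S] S) = (L : ℕ∞) := (ENat.coe_toNat hdual).symm
  have main : ∀ n, 1 ≤ n → f ((α ^ n) v) ≠ 0 →
      ∃ k, n < k ∧ k ≤ n + L + 1 ∧ f ((α ^ k) v) ≠ 0 :=
    fun n hn hsn => main_step hdual α hα f v hn hsn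
  constructor
  · apply Set.infinite_of_forall_exists_gt
    intro a
    induction a with
    | zero => exact ⟨1, h1, Nat.one_pos⟩
    | succ a ih =>
      obtain ⟨b, hb, hab⟩ := ih
      obtain ⟨k, hk1, _, hk3⟩ := main b (by omega) hb
      exact ⟨k, hk3, by omega⟩
  · intro n hn hsn
    obtain ⟨k, hk1, hk2, hk3⟩ := main n hn hsn
    refine ⟨k, hk1, ?_, hk3⟩
    rw [hcast]
    calc (k : ℕ∞) ≤ ((n + L + 1 : ℕ) : ℕ∞) := Nat.cast_le.mpr hk2
      _ = (n : ℕ∞) + (L : ℕ∞) + 1 := by push_cast; ring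
end

section
/- Let S be a commutative semiring, M an S-semimodule of finite length ℓ(M), and α : M → M an S-linear endomorphism. Then α^{ℓ(M)} is pseudoregular, i.e., im α^{ℓ(M)} = im α^{2·ℓ(M)}. -/
theorem chain_le {S M : Type*} [Semiring S] [AddCommMonoid M] [Module S M]
    {r : ℕ} (h : ∃ c : Fin (r + 1) → Submodule S M, StrictMono c) :
    (r : ℕ∞) ≤ semimoduleLength S M :=
  le_iSup (fun r : {r : ℕ // ∃ c : Fin (r + 1) → Submodule S M, StrictMono c} => ((r : ℕ) : ℕ∞)) ⟨r, h⟩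

theorem range_succ {S M : Type*} [CommSemiring S] [AddCommMonoid M] [Module S M]
    (α : Module.End S M) (k : ℕ) :
    LinearMap.range (α ^ (k + 1)) = Submodule.map α (LinearMap.range (α ^ k)) := by
  rw [pow_succ', Module.End.mul_eq_comp, LinearMap.range_comp]

theorem range_anti {S M : Type*} [CommSemiring S] [AddCommMonoid M] [Module S M]
    (α : Module.End S M) (k : ℕ) :
    LinearMap.range (α ^ (k + 1)) ≤ LinearMap.range (α ^ k) := by
  rw [pow_succ, Module.End.mul_eq_comp]
  exact LinearMap.range_comp_le_range _ _

theorem stab {S M : Type*} [CommSemiring S] [AddCommMonoid M] [Module S M]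
    (α : Module.End S M) {k : ℕ}
    (h : LinearMap.range (α ^ (k + 1)) = LinearMap.range (α ^ k)) (m : ℕ) :
    LinearMap.range (α ^ (k + m)) = LinearMap.range (α ^ k) := by
  induction m with
  | zero => rfl
  | succ m ih => rw [← Nat.add_assoc, range_succ, ih, ← range_succ, h]

/-- For a finite-length semimodule `M` and an endomorphism `α`, the power `α^{ℓ(M)}` is
pseudoregular, i.e. `im α^{ℓ(M)} = im α^{2·ℓ(M)}`. -/
theorem pow_length_pseudoregular {S : Type*} [CommSemiring S]
    {M : Type*} [AddCommMonoid M] [Module S M]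
    (hM : semimoduleLength S M ≠ ⊤) (α : Module.End S M) :
    LinearMap.range (α ^ (semimoduleLength S M).toNat) =
      LinearMap.range (α ^ (2 * (semimoduleLength S M).toNat)) := by
  set n := (semimoduleLength S M).toNat with hn
  -- find k ≤ n with stabilization
  have hex : ∃ k ≤ n, LinearMap.range (α ^ (k + 1)) = LinearMap.range (α ^ k) := by
    by_contra hc
    push_neg at hc
    have hstrict : ∀ k ≤ n, LinearMap.range (α ^ (k + 1)) < LinearMap.range (α ^ k) :=
      fun k hk => lt_of_le_of_ne (range_anti α k) (hc k hk)
    have : ((n + 1 : ℕ) : ℕ∞) ≤ semimoduleLength S M := by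
      apply chain_le
      refine ⟨fun i => LinearMap.range (α ^ (n + 1 - i.val)), ?_⟩
      intro i j hij
      have hj : j.val ≤ n + 1 := Nat.lt_succ_iff.mp j.2
      have h1 : n + 1 - j.val < n + 1 - i.val := by omega
      have : ∀ a b, a < b → b ≤ n + 1 →
          LinearMap.range (α ^ b) < LinearMap.range (α ^ a) := by
        intro a b hab hb
        induction b with
        | zero => omega
        | succ b ihb =>
          rcases Nat.lt_succ_iff_lt_or_eq.mp hab with h | h
          · exact lt_trans (hstrict b (by omega)) (ihb h (by omega))
          · subst h; exact hstrict a (by omega)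
      exact this _ _ h1 (by omega)
    have hcoe : ((n : ℕ) : ℕ∞) = semimoduleLength S M := by rw [hn]; exact ENat.coe_toNat hM
    have hle : ((n + 1 : ℕ) : ℕ∞) ≤ ((n : ℕ) : ℕ∞) := by rw [hcoe]; exact this
    exact absurd (Nat.cast_le.mp hle) (by omega)
  obtain ⟨k, hk, hkstab⟩ := hex
  have h1 : LinearMap.range (α ^ n) = LinearMap.range (α ^ k) := by
    have := stab α hkstab (n - k)
    rwa [Nat.add_sub_cancel' hk] at this
  have h2 : LinearMap.range (α ^ (2 * n)) = LinearMap.range (α ^ k) := by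
    have := stab α hkstab (2 * n - k)
    rwa [Nat.add_sub_cancel' (by omega)] at this
  rw [h1, h2]
end

section
/- Let Σ be a finite alphabet and r ∈ ℕ. Define N₀ = 1 and N_{r+1} = N_r · (1 + |Σ|^{N_r}). Then every word w ∈ Σ* with |w| ≥ N_r contains a subword (a contiguous factor) that is a quasipower of order r. -/
/-- A word is a quasipower of order `0` if it is nonempty; it is a quasipower of order
`n + 1` if it has the form `u * v * u` where `u` is a quasipower of order `n`. -/
def IsQuasipower {A : Type*} : ℕ → FreeMonoid A → Prop
  | 0, w => w ≠ 1
  | n + 1, w => ∃ u v : FreeMonoid A, IsQuasipower n u ∧ w = u * v * u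

/-- The bound `N_r`: `N_0 = 1` and `N_{r+1} = N_r · (1 + |Σ|^{N_r})`. -/
def quasipowerBound (c : ℕ) : ℕ → ℕ
  | 0 => 1
  | r + 1 => quasipowerBound c r * (1 + c ^ quasipowerBound c r)

/-!
Induction on `r`. A word of length `N * (1 + |Σ|^N)` consists of `1 + |Σ|^N` consecutive blocks
of length `N`, so by pigeonhole two of them coincide and the word contains a factor `b m b` with
`|b| = N`. If `b` contains a quasipower `u` of order `r`, say `b = p u q`, then `b m b` contains
`u (q m p) u`, a quasipower of order `r + 1`.
-/

namespace List

variable {α : Type*}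

theorem exists_append_append_infix_of_take_drop_eq {l : List α} {s t n : ℕ} (hst : s + n ≤ t)
    (h : (l.drop s).take n = (l.drop t).take n) :
    ∃ m, (l.drop s).take n ++ m ++ (l.drop s).take n <:+: l := by
  refine ⟨(l.drop (s + n)).take (t - (s + n)), ?_⟩
  have hsplit : (l.drop s).take (n + (t - (s + n)) + n) = (l.drop s).take n ++
      (l.drop (s + n)).take (t - (s + n)) ++ (l.drop t).take n := by
    rw [take_add, take_add, drop_drop, drop_drop]
    congr 3; omega
  rw [← h] at hsplit
  rw [← hsplit]
  exact (take_prefix _ _).isInfix.trans (drop_suffix _ _).isInfix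

theorem exists_append_append_infix_of_length_ge [Fintype α] (n : ℕ) {l : List α}
    (hl : n * (1 + Fintype.card α ^ n) ≤ l.length) :
    ∃ b m, b.length = n ∧ b ++ m ++ b <:+: l := by
  have hblock_le (k : Fin (1 + Fintype.card α ^ n)) : k * n + n ≤ l.length := by
    nlinarith [k.isLt]
  let block (k : Fin (1 + Fintype.card α ^ n)) : List.Vector α n :=
    ⟨(l.drop (k * n)).take n, by have := hblock_le k; simp only [length_take, length_drop]; omega⟩
  have hcard : Fintype.card (List.Vector α n) < Fintype.card (Fin (1 + Fintype.card α ^ n)) := by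
    simp [card_vector]
  obtain ⟨i, j, hij, hblock⟩ := Fintype.exists_ne_map_eq_of_card_lt block hcard
  replace hblock : (l.drop (i * n)).take n = (l.drop (j * n)).take n := congrArg Subtype.val hblock
  have hlen (k : Fin (1 + Fintype.card α ^ n)) : ((l.drop (k * n)).take n).length = n :=
    (block k).2
  wlog hlt : i < j generalizing i j
  · exact this j i hij.symm hblock.symm (hij.symm.lt_of_le (not_lt.mp hlt))
  have hij_le : (i : ℕ) * n + n ≤ j * n := by
    rw [← Nat.succ_mul]; exact Nat.mul_le_mul_right n hlt
  obtain ⟨m, hm⟩ := exists_append_append_infix_of_take_drop_eq hij_le hblock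
  exact ⟨_, m, hlen i, hm⟩

end List

theorem exists_isQuasipower_succ_infix {A : Type*} {r : ℕ} {x b : List A}
    (hx : IsQuasipower r (FreeMonoid.ofList x)) (hxb : x <:+: b) (m : List A) :
    ∃ y, IsQuasipower (r + 1) (FreeMonoid.ofList y) ∧ y <:+: b ++ m ++ b := by
  obtain ⟨p, q, rfl⟩ := hxb
  refine ⟨x ++ (q ++ m ++ p) ++ x, ⟨_, FreeMonoid.ofList (q ++ m ++ p), hx, rfl⟩, p, q, ?_⟩
  simp only [List.append_assoc]

theorem exists_isQuasipower_infix {A : Type*} [Fintype A] (r : ℕ) {l : List A}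
    (hl : quasipowerBound (Fintype.card A) r ≤ l.length) :
    ∃ x, IsQuasipower r (FreeMonoid.ofList x) ∧ x <:+: l := by
  induction r generalizing l with
  | zero =>
    have hne : l ≠ [] := List.ne_nil_of_length_pos hl
    exact ⟨l, fun h => hne (congrArg FreeMonoid.toList h), List.infix_refl l⟩
  | succ r ih =>
    obtain ⟨b, m, hb, hbmb⟩ := List.exists_append_append_infix_of_length_ge _ hl
    obtain ⟨x, hx, hxb⟩ := ih hb.ge
    obtain ⟨y, hy, hybmb⟩ := exists_isQuasipower_succ_infix hx hxb m
    exact ⟨y, hy, hybmb.trans hbmb⟩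

/-- Every word over a finite alphabet of length at least `N_r` contains a subword that is a
quasipower of order `r`. -/
theorem exists_quasipower_subword {A : Type*} [Fintype A] (r : ℕ) (w : FreeMonoid A)
    (hw : quasipowerBound (Fintype.card A) r ≤ (FreeMonoid.toList w).length) :
    ∃ u x v : FreeMonoid A, w = u * x * v ∧ IsQuasipower r x := by
  obtain ⟨x, hx, s, t, hw⟩ := exists_isQuasipower_infix r hw
  refine ⟨FreeMonoid.ofList s, FreeMonoid.ofList x, FreeMonoid.ofList t, ?_, hx⟩
  apply FreeMonoid.toList.injective
  simp [hw]
end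

section
/- Let Σ be a finite alphabet, S a commutative semiring, M an S-semimodule of finite length, and μ : Σ* → End(M) a monoid homomorphism into the monoid of S-linear endomorphisms of M under composition. Then every word w ∈ Σ* that is a quasipower of order ℓ(M) + 1 contains a subword x ≠ ε such that μ(x) is pseudoregular. -/
/-!
If no nonempty factor of a quasipower `w = u v u` of order `n + 1` has pseudoregular image, then
`im μ(u v u) ⊊ im μ(u)`: equality would give `im μ(u v) = im μ(u) = im μ(u v u)`, making `μ(u v)`
pseudoregular. By induction a quasipower of order `n` then yields a strict chain of `n + 1`
submodules, which is impossible for `n = ℓ(M) + 1`.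
-/

namespace Module.End

variable {S M : Type*} [Semiring S] [AddCommMonoid M] [Module S M]

def IsPseudoregular (f : Module.End S M) : Prop :=
  LinearMap.range f = LinearMap.range (f ∘ₗ f)

theorem isPseudoregular_mul_of_range_mul_mul_eq {a b : Module.End S M}
    (h : LinearMap.range (a * b * a) = LinearMap.range a) : IsPseudoregular (a * b) := by
  have hab : LinearMap.range (a * b) = LinearMap.range a := by
    refine le_antisymm (LinearMap.range_comp_le_range b a) ?_
    rw [← h]
    exact LinearMap.range_comp_le_range a (a * b)
  calc LinearMap.range (a * b) = LinearMap.range ((a * b) ∘ₗ a) := by rw [hab, ← h]; rfl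
    _ = (LinearMap.range a).map (a * b) := LinearMap.range_comp _ _
    _ = LinearMap.range ((a * b) ∘ₗ (a * b)) := by rw [← hab, LinearMap.range_comp]

end Module.End

theorem IsQuasipower.ne_one {A : Type*} : ∀ {n : ℕ} {w : FreeMonoid A}, IsQuasipower n w → w ≠ 1
  | 0, _, hw => hw
  | _ + 1, _, ⟨_, _, hu, rfl⟩ => fun h => hu.ne_one (eq_one_of_mul_right' (eq_one_of_mul_right' h))

section Factors

variable {A S M : Type*} [Semiring S] [AddCommMonoid M] [Module S M]

def HasPseudoregularFactor (μ : FreeMonoid A →* Module.End S M) (w : FreeMonoid A) : Prop :=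
  ∃ u x v : FreeMonoid A, w = u * x * v ∧ x ≠ 1 ∧ (μ x).IsPseudoregular

theorem HasPseudoregularFactor.mul_right {μ : FreeMonoid A →* Module.End S M}
    {w : FreeMonoid A} (h : HasPseudoregularFactor μ w) (y : FreeMonoid A) :
    HasPseudoregularFactor μ (w * y) := by
  obtain ⟨u, x, v, rfl, hx, hμx⟩ := h
  exact ⟨u, x, v * y, by simp only [mul_assoc], hx, hμx⟩

theorem IsQuasipower.exists_strictMono_range {μ : FreeMonoid A →* Module.End S M} :
    ∀ {n : ℕ} {w : FreeMonoid A}, IsQuasipower n w → ¬ HasPseudoregularFactor μ w →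
      ∃ c : Fin (n + 1) → Submodule S M, StrictMono c ∧ c 0 = LinearMap.range (μ w)
  | 0, w, _, _ => ⟨fun _ => LinearMap.range (μ w), Subsingleton.strictMono (α := Fin 1) _, rfl⟩
  | _ + 1, _, ⟨u, v, hu, rfl⟩, hw => by
    obtain ⟨c, hc, hc0⟩ :=
      hu.exists_strictMono_range fun h => hw ((h.mul_right v).mul_right u)
    have hμ : μ (u * v * u) = μ u * μ v * μ u := by simp only [map_mul]
    have hle : LinearMap.range (μ (u * v * u)) ≤ LinearMap.range (μ u) := by
      rw [hμ, mul_assoc]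
      exact LinearMap.range_comp_le_range _ _
    have hlt : LinearMap.range (μ (u * v * u)) < c 0 := by
      refine hc0 ▸ hle.lt_of_ne fun heq => hw ⟨1, u * v, u, by rw [one_mul], ?_, ?_⟩
      · exact fun h => hu.ne_one (eq_one_of_mul_right' h)
      · rw [map_mul]
        exact Module.End.isPseudoregular_mul_of_range_mul_mul_eq (hμ ▸ heq)
    exact ⟨Matrix.vecCons _ c, hc.vecCons hlt, rfl⟩

end Factors

theorem le_semimoduleLength_of_strictMono {S M : Type*} [Semiring S] [AddCommMonoid M]
    [Module S M] {r : ℕ} (c : Fin (r + 1) → Submodule S M) (hc : StrictMono c) :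
    (r : ℕ∞) ≤ semimoduleLength S M :=
  le_iSup (fun r : {r : ℕ // ∃ c : Fin (r + 1) → Submodule S M, StrictMono c} => ((r : ℕ) : ℕ∞))
    ⟨r, c, hc⟩

theorem quasipower_contains_pseudoregular_general {A : Type*} {S M : Type*}
    [CommSemiring S] [AddCommMonoid M] [Module S M]
    (hM : semimoduleLength S M ≠ ⊤)
    (μ : FreeMonoid A →* Module.End S M) (w : FreeMonoid A)
    (hw : IsQuasipower ((semimoduleLength S M).toNat + 1) w) :
    ∃ u x v : FreeMonoid A, w = u * x * v ∧ x ≠ 1 ∧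
      LinearMap.range (μ x) = LinearMap.range (μ x ∘ₗ μ x) := by
  by_contra hfree
  obtain ⟨c, hc, -⟩ := hw.exists_strictMono_range hfree
  have hlen := ENat.toNat_le_toNat (le_semimoduleLength_of_strictMono c hc) hM
  rw [ENat.toNat_natCast] at hlen
  omega

/-- If `M` is a finite-length semimodule and `μ : Σ* → End(M)` a monoid homomorphism, then
every quasipower `w` of order `ℓ(M) + 1` contains a nonempty subword `x` with `μ(x)`
pseudoregular (`im μ(x) = im μ(x)²`). -/
theorem quasipower_contains_pseudoregular {A : Type*} [Fintype A] {S M : Type*}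
    [CommSemiring S] [AddCommMonoid M] [Module S M]
    (hM : semimoduleLength S M ≠ ⊤)
    (μ : FreeMonoid A →* Module.End S M) (w : FreeMonoid A)
    (hw : IsQuasipower ((semimoduleLength S M).toNat + 1) w) :
    ∃ u x v : FreeMonoid A, w = u * x * v ∧ x ≠ 1 ∧
      LinearMap.range (μ x) = LinearMap.range (μ x ∘ₗ μ x) :=
  quasipower_contains_pseudoregular_general hM μ w hw
end

section
/- Let S be an Artinian commutative semiring and let Σ = {a, b} be a two-letter alphabet. There is no recognizable weighted language L : Σ* → S whose support equals {aⁿbⁿ | n ∈ ℕ}. -/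
/-- A weighted language `L : Σ* → S` is recognizable if it admits a linear representation
`(Q, fin, fout, μ)`: a finite state set `Q`, vectors `fin, fout : Q → S`, and a monoid
homomorphism `μ` into the multiplicative monoid of `Q × Q` matrices over `S`, with
`L(w) = fin ⬝ μ(w) ⬝ fout` for all words `w`. -/
def IsRecognizable {A : Type*} {S : Type*} [CommSemiring S] (L : FreeMonoid A → S) : Prop :=
  ∃ (n : ℕ) (fin fout : Fin n → S) (μ : FreeMonoid A →* Matrix (Fin n) (Fin n) S),
    ∀ w, L w = dotProduct (Matrix.vecMul fin (μ w)) fout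

theorem semimoduleLength_eq_top_of_strictAnti {S M : Type*} [Semiring S] [AddCommMonoid M]
    [Module S M] {N : ℕ → Submodule S M} (hN : StrictAnti N) : semimoduleLength S M = ⊤ :=
  ENat.eq_top_iff_forall_ge.2 fun r =>
    le_semimoduleLength (c := fun i : Fin (r + 1) => N i.rev)
      (hN.comp (Fin.val_strictMono.comp_strictAnti Fin.rev_strictAnti))

theorem strictAnti_span_image_Ici {S M N : Type*} [Semiring S] [AddCommMonoid M] [Module S M]
    [AddCommMonoid N] [Module S N] (v : ℕ → M) (φ : ℕ → M →ₗ[S] N)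
    (hzero : ∀ k m, k < m → φ k (v m) = 0) (hne : ∀ k, φ k (v k) ≠ 0) :
    StrictAnti fun k => Submodule.span S (v '' Set.Ici k) := by
  refine strictAnti_nat_of_succ_lt fun k => lt_of_le_of_ne ?_ fun h => hne k ?_
  · exact Submodule.span_mono (Set.image_mono (Set.Ici_subset_Ici.2 k.le_succ))
  · have hker : Submodule.span S (v '' Set.Ici (k + 1)) ≤ LinearMap.ker (φ k) :=
      Submodule.span_le.2 <| Set.image_subset_iff.2 (hzero k)
    exact hker (h ▸ Submodule.subset_span ⟨k, Set.self_mem_Ici, rfl⟩)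

theorem List.replicate_append_replicate_inj {α : Type*} {a b : α} (hab : a ≠ b) {m k m' k' : ℕ} :
    replicate m a ++ replicate k b = replicate m' a ++ replicate k' b ↔ m = m' ∧ k = k' := by
  classical
  refine ⟨fun h => ?_, by rintro ⟨rfl, rfl⟩; rfl⟩
  have hcounts := And.intro (congrArg (count a) h) (congrArg (count b) h)
  simpa [count_replicate, hab, hab.symm] using hcounts

/-- Over an Artinian commutative semiring, no recognizable weighted language over the
two-letter alphabet `{a, b}` (here `a = true`, `b = false`) has support
`{aⁿbⁿ | n ∈ ℕ}`. -/
theorem no_recognizable_anbn {S : Type u} [CommSemiring S] (hS : IsArtinianSemiring S) :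
    ¬ ∃ L : FreeMonoid Bool → S, IsRecognizable L ∧
      {w | L w ≠ 0} = {w : FreeMonoid Bool |
        ∃ m : ℕ, w = FreeMonoid.ofList (List.replicate m true ++ List.replicate m false)} := by
  rintro ⟨L, ⟨n, fin, fout, μ, hμ⟩, hsupp⟩
  let v (m : ℕ) : Fin n → S := Matrix.vecMul fin (μ (.ofList (List.replicate m true)))
  let w (k : ℕ) : Fin n → S := Matrix.mulVec (μ (.ofList (List.replicate k false))) fout
  have hL (m k : ℕ) :
      L (.ofList (List.replicate m true ++ List.replicate k false)) = v m ⬝ᵥ w k := by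
    rw [hμ, FreeMonoid.ofList_append, map_mul, ← Matrix.vecMul_vecMul, Matrix.dotProduct_mulVec]
  have hdiag (m k : ℕ) : v m ⬝ᵥ w k ≠ 0 ↔ m = k := by
    rw [← hL]
    refine (Set.ext_iff.1 hsupp _).trans ?_
    simp only [Set.mem_ofPred_eq, FreeMonoid.ofList.injective.eq_iff,
      List.replicate_append_replicate_inj (by decide : true ≠ false)]
    exact ⟨fun ⟨j, hm, hk⟩ => hm.trans hk.symm, fun h => ⟨m, rfl, h.symm⟩⟩
  have hchain := strictAnti_span_image_Ici v (fun k => (dotProductBilin S S).flip (w k))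
    (fun k m hkm => not_not.1 <| (hdiag m k).not.2 hkm.ne') (fun k => (hdiag k k).2 rfl)
  exact hS _ Module.Finite.pi (semimoduleLength_eq_top_of_strictAnti hchain)
end
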